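/- arXiv:0907.2910 — 4 statements merged into one kernel-verified Lean document; each statement's English description precedes it below -/
import Mathlib

section
/- For ρ ∈ (0,1), the function u ↦ ((1+√ρ e^{−u})/(√ρ+e^{−u}))² · e^{−2√ρ x sinh u} (for fixed x with 0 < x < (1−√ρ)/(√ρ(1+√ρ))) takes the value 1 at exactly one point u > 0. That is, the equation ((1+√ρ e^{−u})/(√ρ+e^{−u}))² = e^{2√ρ x sinh u} has a unique positive root u(x). -/
/-!
Put `s = √ρ` and `F u = 2 log ((1 + s e^{-u}) / (s + e^{-u})) - 2 s x sinh u`, so that the roots of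
the equation are the zeros of `F`. Writing `(1 + s e^{-u}) (s + e^{-u})` as
`e^{-u} (1 + s² + 2 s cosh u)` gives `F' u = 2 (1 - s²) / (1 + s² + 2 s cosh u) - 2 s x cosh u`,
which is strictly decreasing on `u ≥ 0`, so `F` is strictly concave there. Since `F 0 = 0`, a
strictly concave `F` has at most one zero in `u > 0`; the bound on `x` says exactly that
`F' 0 > 0`, so `F` is positive just right of `0`, and `F u ≤ -2 log s - 2 s x sinh u → -∞`
yields a zero by the intermediate value theorem.
-/

open Real Filter Set Topology

theorem exists_gt_lt_of_hasDerivAt {f : ℝ → ℝ} {d a : ℝ} (hf : HasDerivAt f d a)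
    (hd : 0 < d) : ∃ b, a < b ∧ f a < f b := by
  have hslope : ∀ᶠ b in 𝓝[>] a, 0 < slope f a b :=
    ((hasDerivAt_iff_tendsto_slope.mp hf).mono_left (nhdsGT_le_nhdsNE a)).eventually
      (eventually_gt_nhds hd)
  obtain ⟨b, hpos, hab⟩ := (hslope.and self_mem_nhdsWithin).exists
  refine ⟨b, hab, ?_⟩
  rwa [slope_def_field, div_pos_iff_of_pos_right (sub_pos.2 hab), sub_pos] at hpos

theorem StrictConcaveOn.existsUnique_gt_eq {f : ℝ → ℝ} {p a : ℝ}
    (hf : StrictConcaveOn ℝ (Ici p) f) (hc : ContinuousOn f (Ici p)) (hpa : p < a)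
    (hfa : f p < f a) (htop : Tendsto f atTop atBot) :
    ∃! u, p < u ∧ f u = f p := by
  obtain ⟨b, hfb, hab⟩ := ((htop.eventually (eventually_lt_atBot (f p))).and
    (eventually_gt_atTop a)).exists
  obtain ⟨u, hu, hfu⟩ := intermediate_value_Icc' hab.le
    (hc.mono (Icc_subset_Ici_iff hab.le |>.2 hpa.le)) ⟨hfb.le, hfa.le⟩
  refine ⟨u, ⟨hpa.trans_le hu.1, hfu⟩, ?_⟩
  have no_two_roots : ∀ v w, p < v → v < w → f v = f p → f w = f p → False := by
    intro v w hv hvw hfv hfw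
    have hw := hv.trans hvw
    have := hf.secant_strict_mono self_mem_Ici hv.le hw.le hv.ne' hw.ne' hvw
    simp [hfv, hfw] at this
  rintro v ⟨hv, hfv⟩
  by_contra hne
  rcases lt_or_gt_of_ne hne with h | h
  · exact no_two_roots v u hv h hfv hfu
  · exact no_two_roots u v (hpa.trans_le hu.1) h hfu hfv

noncomputable def logRatioSubSinh (s x u : ℝ) : ℝ :=
  2 * (log (1 + s * exp (-u)) - log (s + exp (-u))) - 2 * s * x * sinh u

noncomputable def logRatioSubSinh' (s x u : ℝ) : ℝ :=
  2 * (1 - s ^ 2) / (1 + s ^ 2 + 2 * s * cosh u) - 2 * s * x * cosh u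

section logRatioSubSinh

variable {s : ℝ} (x : ℝ)

theorem logRatioSubSinh_zero : logRatioSubSinh s x 0 = 0 := by
  simp [logRatioSubSinh, add_comm]

theorem sq_ratio_eq_exp_iff (hs : 0 < s) (u : ℝ) :
    ((1 + s * exp (-u)) / (s + exp (-u))) ^ 2 = exp (2 * s * x * sinh u) ↔
      logRatioSubSinh s x u = 0 := by
  have h₁ : 0 < 1 + s * exp (-u) := by positivity
  have h₂ : 0 < s + exp (-u) := by positivity
  conv_lhs => rw [← exp_log (by positivity : 0 < ((1 + s * exp (-u)) / (s + exp (-u))) ^ 2)]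
  rw [exp_eq_exp, log_pow, log_div h₁.ne' h₂.ne', logRatioSubSinh, sub_eq_zero]
  exact_mod_cast Iff.rfl

theorem hasDerivAt_logRatioSubSinh (hs : 0 < s) (u : ℝ) :
    HasDerivAt (logRatioSubSinh s x) (logRatioSubSinh' s x u) u := by
  have h₁ : 0 < 1 + s * exp (-u) := by positivity
  have h₂ : 0 < s + exp (-u) := by positivity
  have hexp : HasDerivAt (fun u => exp (-u)) (-exp (-u)) u := by
    simpa using (hasDerivAt_neg u).exp
  have hF : HasDerivAt (logRatioSubSinh s x) (2 * (s * -exp (-u) / (1 + s * exp (-u))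
      - -exp (-u) / (s + exp (-u))) - 2 * s * x * cosh u) u :=
    (((((hexp.const_mul s).const_add 1).log h₁.ne').sub
      ((hexp.const_add s).log h₂.ne')).const_mul 2).sub
      ((hasDerivAt_sinh u).const_mul (2 * s * x))
  refine hF.congr_deriv ?_
  have hcosh : 2 * cosh u * exp (-u) = 1 + exp (-u) ^ 2 := by
    have he : exp u * exp (-u) = 1 := by rw [← exp_add, add_neg_cancel, exp_zero]
    rw [cosh_eq]
    linear_combination he
  have hD₀ : 0 < 1 + s ^ 2 + 2 * s * cosh u := by
    have := one_le_cosh u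
    positivity
  unfold logRatioSubSinh'
  field_simp
  linear_combination s * (1 - s ^ 2) * hcosh

theorem continuous_logRatioSubSinh (hs : 0 < s) : Continuous (logRatioSubSinh s x) :=
  continuous_iff_continuousAt.2 fun u ↦ (hasDerivAt_logRatioSubSinh x hs u).continuousAt

theorem strictAntiOn_logRatioSubSinh' (hs₀ : 0 < s) (hs₁ : s ≤ 1) (hx : 0 < x) :
    StrictAntiOn (logRatioSubSinh' s x) (Ici 0) := by
  intro a ha b hb hab
  have hcosh : cosh a < cosh b := cosh_strictMonoOn ha hb hab
  have hDa : 0 < 1 + s ^ 2 + 2 * s * cosh a := by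
    have := one_le_cosh a
    positivity
  have hfrac : 2 * (1 - s ^ 2) / (1 + s ^ 2 + 2 * s * cosh b)
      ≤ 2 * (1 - s ^ 2) / (1 + s ^ 2 + 2 * s * cosh a) := by
    have : 0 ≤ 1 - s ^ 2 := by nlinarith
    gcongr
  have hlin : 2 * s * x * cosh a < 2 * s * x * cosh b := by gcongr
  simp only [logRatioSubSinh']
  linarith

theorem strictConcaveOn_logRatioSubSinh (hs₀ : 0 < s) (hs₁ : s ≤ 1) (hx : 0 < x) :
    StrictConcaveOn ℝ (Ici 0) (logRatioSubSinh s x) := by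
  refine StrictAntiOn.strictConcaveOn_of_deriv (convex_Ici 0)
    (continuous_logRatioSubSinh x hs₀).continuousOn ?_
  rw [interior_Ici]
  intro a ha b hb hab
  simp only [(hasDerivAt_logRatioSubSinh x hs₀ _).deriv]
  exact strictAntiOn_logRatioSubSinh' x hs₀ hs₁ hx (Ioi_subset_Ici_self ha)
    (Ioi_subset_Ici_self hb) hab

theorem logRatioSubSinh'_zero_pos (hs : 0 < s) (hx : x < (1 - s) / (s * (1 + s))) :
    0 < logRatioSubSinh' s x 0 := by
  have key : s * x < (1 - s) / (1 + s) := by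
    calc s * x < s * ((1 - s) / (s * (1 + s))) := by gcongr
      _ = (1 - s) / (1 + s) := by field_simp
  have hden : 1 + s ^ 2 + 2 * s * cosh 0 = (1 + s) ^ 2 := by rw [cosh_zero]; ring
  rw [logRatioSubSinh', hden, cosh_zero, mul_one, sub_pos]
  calc 2 * s * x = 2 * (s * x) := by ring
    _ < 2 * ((1 - s) / (1 + s)) := by gcongr
    _ = 2 * (1 - s ^ 2) / (1 + s) ^ 2 := by field_simp; ring

theorem tendsto_logRatioSubSinh_atTop (hs₀ : 0 < s) (hs₁ : s ≤ 1) (hx : 0 < x) :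
    Tendsto (logRatioSubSinh s x) atTop atBot := by
  have hsinh : Tendsto sinh atTop atTop :=
    tendsto_atTop_mono' _ ((eventually_ge_atTop 0).mono fun u hu ↦ self_le_sinh_iff.2 hu) tendsto_id
  -- the ratio `(1 + s e^{-u}) / (s + e^{-u})` stays below `1 / s`
  have hbound : ∀ u, logRatioSubSinh s x u ≤ -2 * log s - 2 * s * x * sinh u := by
    intro u
    have hlog : log (1 + s * exp (-u)) ≤ log ((s + exp (-u)) / s) := by
      gcongr
      rw [le_div_iff₀ hs₀]
      have hs2 : s ^ 2 ≤ 1 := by nlinarith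
      nlinarith [mul_le_mul_of_nonneg_right hs2 (exp_pos (-u)).le]
    rw [log_div (by positivity) hs₀.ne'] at hlog
    simp only [logRatioSubSinh]
    linarith
  refine tendsto_atBot_mono hbound ?_
  simpa only [sub_eq_add_neg, Function.comp_def] using
    tendsto_atBot_add_const_left _ (-2 * log s)
    (tendsto_neg_atTop_atBot.comp (hsinh.const_mul_atTop (by positivity : 0 < 2 * s * x)))

end logRatioSubSinh

/-- for `0 < x < x*`, the equation
`((1+√ρ e^{−u})/(√ρ+e^{−u}))² = e^{2√ρ x sinh u}` has a unique positive root. -/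
theorem stmt9 (ρ x : ℝ) (hρ : ρ ∈ Set.Ioo (0:ℝ) 1)
    (hx : 0 < x) (hx' : x < (1 - Real.sqrt ρ) / (Real.sqrt ρ * (1 + Real.sqrt ρ))) :
    ∃! u : ℝ, 0 < u ∧
      ((1 + Real.sqrt ρ * Real.exp (-u)) / (Real.sqrt ρ + Real.exp (-u))) ^ 2
        = Real.exp (2 * Real.sqrt ρ * x * Real.sinh u) := by
  have hs₀ : 0 < √ρ := sqrt_pos.2 hρ.1
  have hs₁ : √ρ ≤ 1 := sqrt_le_one.2 hρ.2.le
  obtain ⟨a, ha, hfa⟩ := exists_gt_lt_of_hasDerivAt (hasDerivAt_logRatioSubSinh x hs₀ 0)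
    (logRatioSubSinh'_zero_pos x hs₀ hx')
  have hroot := (strictConcaveOn_logRatioSubSinh x hs₀ hs₁ hx).existsUnique_gt_eq
    (continuous_logRatioSubSinh x hs₀).continuousOn ha hfa
    (tendsto_logRatioSubSinh_atTop x hs₀ hs₁ hx)
  simpa only [sq_ratio_eq_exp_iff x hs₀, logRatioSubSinh_zero] using hroot
end

section
/- For v real with v ≠ 0 and X > 0, the equation ((2iv+1)/(2iv−1))² = e^{−2ivX} is equivalent to (4v²−1) sin(Xv) = 4v cos(Xv), which factors as [cos(Xv/2) − 2v sin(Xv/2)]·[2v cos(Xv/2) + sin(Xv/2)] = 0; hence the positive real roots are exactly the v > 0 satisfying cot(Xv/2) = 2v or tan(Xv/2) = −2v. -/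
/-!
With `w = 1 + 2iv` we have `(2iv + 1)/(2iv - 1) = -w / conj w`, so the eigenvalue equation
`(w / conj w)² = e^{-2iθ}` says exactly that `w² e^{iθ}` equals its own conjugate, i.e. is real.
Its imaginary part is `(1 - 4v²) sin θ + 4v cos θ`. Writing `θ = 2φ` and using the double-angle
formulas, `(4v² - 1) sin θ - 4v cos θ = -2 (cos φ - 2v sin φ)(2v cos φ + sin φ)`, and for `v ≠ 0`
the two factors vanish exactly when `cot φ = 2v`, resp. `tan φ = -2v`.
-/

open Real Complex ComplexConjugate

theorem Complex.div_conj_sq_eq_exp_iff_im_eq_zero {w : ℂ} (hw : w ≠ 0) (θ : ℝ) :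
    (w / conj w) ^ 2 = exp (-2 * θ * I) ↔ (w ^ 2 * exp (θ * I)).im = 0 := by
  have hcw : conj w ≠ 0 := (map_ne_zero _).mpr hw
  have hu : exp (θ * I) ≠ 0 := exp_ne_zero _
  have hexp2 : exp (-2 * θ * I) = (exp (θ * I))⁻¹ ^ 2 := by
    rw [← exp_neg, ← exp_nat_mul]; push_cast; ring_nf
  have hconj : conj (exp (θ * I)) = (exp (θ * I))⁻¹ := by
    rw [← exp_conj, ← exp_neg, map_mul, conj_ofReal, conj_I, mul_neg]
  rw [← conj_eq_iff_im, map_mul, map_pow, hconj, hexp2]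
  constructor <;> intro h <;> field_simp at h ⊢ <;> linear_combination -h

theorem eigenvalue_equation_iff (v θ : ℝ) :
    ((2 * I * v + 1) / (2 * I * v - 1)) ^ 2 = exp (-2 * θ * I) ↔
      (4 * v ^ 2 - 1) * Real.sin θ = 4 * v * Real.cos θ := by
  have hw : (1 + 2 * v * I : ℂ) ≠ 0 := fun h => by simpa using congrArg re h
  have hratio : ((2 * I * v + 1) / (2 * I * v - 1)) ^ 2 =
      ((1 + 2 * v * I) / conj (1 + 2 * v * I)) ^ 2 := by
    simp only [map_add, map_one, map_mul, map_ofNat, conj_ofReal, conj_I]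
    rw [← neg_sq, ← div_neg]
    ring_nf
  rw [hratio, div_conj_sq_eq_exp_iff_im_eq_zero hw]
  simp only [pow_two, mul_im, mul_re, add_re, one_re, re_ofNat, ofReal_re, im_ofNat, ofReal_im,
    mul_zero, sub_zero, I_re, zero_mul, add_zero, I_im, mul_one, sub_self, add_im, one_im, zero_add,
    exp_ofReal_mul_I_im, one_mul, exp_ofReal_mul_I_re]
  constructor <;> intro h <;> linear_combination -h

theorem mul_sin_two_mul_eq_mul_cos_two_mul_iff (v φ : ℝ) :
    (4 * v ^ 2 - 1) * Real.sin (2 * φ) = 4 * v * Real.cos (2 * φ) ↔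
      (Real.cos φ - 2 * v * Real.sin φ) * (2 * v * Real.cos φ + Real.sin φ) = 0 := by
  rw [Real.sin_two_mul, Real.cos_two_mul']
  constructor <;> intro h
  · linear_combination (-1 / 2) * h
  · linear_combination (-2) * h

theorem Real.cot_eq_iff_cos_sub_mul_sin_eq_zero {a : ℝ} (ha : a ≠ 0) (φ : ℝ) :
    cot φ = a ↔ cos φ - a * sin φ = 0 := by
  rw [cot_eq_cos_div_sin]
  by_cases hs : sin φ = 0
  · have hc : cos φ ≠ 0 := by
      intro hc; simpa [hs, hc] using sin_sq_add_cos_sq φ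
    simp [hs, hc, Ne.symm ha]
  · rw [div_eq_iff hs, sub_eq_zero]

theorem Real.tan_eq_neg_iff_mul_cos_add_sin_eq_zero {a : ℝ} (ha : a ≠ 0) (φ : ℝ) :
    tan φ = -a ↔ a * cos φ + sin φ = 0 := by
  rw [tan_eq_sin_div_cos]
  by_cases hc : cos φ = 0
  · have hs : sin φ ≠ 0 := by
      intro hs; simpa [hs, hc] using sin_sq_add_cos_sq φ
    simp [hs, hc, ha]
  · rw [div_eq_iff hc]
    constructor <;> intro h <;> linear_combination h

theorem stmt10_general (v X : ℝ) :
    (((2 * Complex.I * (v:ℂ) + 1) / (2 * Complex.I * (v:ℂ) - 1)) ^ 2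
        = Complex.exp (-2 * Complex.I * (v:ℂ) * (X:ℂ)) ↔
      (4 * v ^ 2 - 1) * Real.sin (X * v) = 4 * v * Real.cos (X * v)) ∧
    ((4 * v ^ 2 - 1) * Real.sin (X * v) = 4 * v * Real.cos (X * v) ↔
      (Real.cos (X * v / 2) - 2 * v * Real.sin (X * v / 2)) *
        (2 * v * Real.cos (X * v / 2) + Real.sin (X * v / 2)) = 0) ∧
    (0 < v →
      ((4 * v ^ 2 - 1) * Real.sin (X * v) = 4 * v * Real.cos (X * v) ↔
        Real.cot (X * v / 2) = 2 * v ∨ Real.tan (X * v / 2) = -2 * v)) := by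
  have hexp : -2 * I * (v : ℂ) * X = -2 * ((X * v : ℝ) : ℂ) * I := by push_cast; ring
  have factor := mul_sin_two_mul_eq_mul_cos_two_mul_iff v (X * v / 2)
  rw [mul_div_cancel₀ _ two_ne_zero] at factor
  refine ⟨hexp ▸ eigenvalue_equation_iff v (X * v), factor, fun hv => ?_⟩
  have h2v : 2 * v ≠ 0 := by positivity
  rw [factor, mul_eq_zero, Real.cot_eq_iff_cos_sub_mul_sin_eq_zero h2v,
    neg_mul, Real.tan_eq_neg_iff_mul_cos_add_sin_eq_zero h2v]

/-- the eigenvalue equation `((2iv+1)/(2iv−1))² = e^{−2ivX}` is equivalent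
to the real condition `(4v²−1) sin(Xv) = 4v cos(Xv)`, which factors; hence positive
roots satisfy `cot(Xv/2) = 2v` or `tan(Xv/2) = −2v`. -/
theorem stmt10 (v X : ℝ) (hv : v ≠ 0) (hX : 0 < X) :
    (((2 * Complex.I * (v:ℂ) + 1) / (2 * Complex.I * (v:ℂ) - 1)) ^ 2
        = Complex.exp (-2 * Complex.I * (v:ℂ) * (X:ℂ)) ↔
      (4 * v ^ 2 - 1) * Real.sin (X * v) = 4 * v * Real.cos (X * v)) ∧
    ((4 * v ^ 2 - 1) * Real.sin (X * v) = 4 * v * Real.cos (X * v) ↔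
      (Real.cos (X * v / 2) - 2 * v * Real.sin (X * v / 2)) *
        (2 * v * Real.cos (X * v / 2) + Real.sin (X * v / 2)) = 0) ∧
    (0 < v →
      ((4 * v ^ 2 - 1) * Real.sin (X * v) = 4 * v * Real.cos (X * v) ↔
        Real.cot (X * v / 2) = 2 * v ∨ Real.tan (X * v / 2) = -2 * v)) :=
  stmt10_general v X
end

section
/- For X > 0, the equation cot(Xv/2) = 2v has a unique solution v₁(X) in the interval (0, π/X), and for each integer n ≥ 1 the combined equation (4v²−1) sin(Xv) = 4v cos(Xv) has exactly one root vₙ(X) in the interval ((n−1)π/X, nπ/X). -/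
/-!
On each interval `(kπ, kπ + π)` the cotangent is strictly decreasing. Away from the zeros of
`sin (X v)` and for `v > 0`, the two equations read `cot (X v / 2) = 2 v` and
`cot (X v) = v - 1 / (4 v)`, a strictly decreasing function equal to a strictly increasing one,
so each has at most one root. Existence comes from the intermediate value theorem: for `n ≥ 2`
the function `(4 v² - 1) sin (X v) - 4 v cos (X v)` takes the values `∓ 4 v cos ((n - 1) π)` at
the endpoints, and for `n = 1` the double-angle formulas turn a root of
`cos (X v / 2) = 2 v sin (X v / 2)` into a root of the second equation.
-/

open Real Set

namespace Real

theorem strictAntiOn_cot (k : ℤ) : StrictAntiOn cot (Ioo (k * π) (k * π + π)) := by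
  have hcot : ∀ x, cot x = tan (π / 2 - x + k * π) := fun x => by
    rw [tan_add_int_mul_pi, tan_pi_div_two_sub, cot_eq_cos_div_sin, tan_eq_sin_div_cos, inv_div]
  intro x hx y hy hxy
  rw [hcot, hcot]
  exact strictMonoOn_tan ⟨by linarith [hy.2], by linarith [hy.1]⟩
    ⟨by linarith [hx.2], by linarith [hx.1]⟩ (by linarith)

theorem sin_ne_zero_of_mem_Ioo (k : ℤ) {x : ℝ} (hx : x ∈ Ioo (k * π) (k * π + π)) :
    sin x ≠ 0 := by
  have hpos : 0 < sin (x - k * π) :=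
    sin_pos_of_pos_of_lt_pi (by linarith [hx.1]) (by linarith [hx.2])
  rw [sin_sub_int_mul_pi] at hpos
  exact right_ne_zero_of_mul hpos.ne'

end Real

theorem StrictAntiOn.eq_of_eq_of_strictMonoOn {α β : Type*} [LinearOrder α] [Preorder β]
    {f g : α → β} {s : Set α} (hf : StrictAntiOn f s) (hg : StrictMonoOn g s) {x y : α}
    (hx : x ∈ s) (hy : y ∈ s) (hfgx : f x = g x) (hfgy : f y = g y) : x = y := by
  rcases lt_trichotomy x y with hxy | rfl | hyx
  · exact absurd (hf hx hy hxy) (by rw [hfgx, hfgy]; exact (hg hx hy hxy).asymm)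
  · rfl
  · exact absurd (hf hy hx hyx) (by rw [hfgx, hfgy]; exact (hg hy hx hyx).asymm)

theorem mul_mem_Ioo_of_mem_Ioo_div {X a b v : ℝ} (hX : 0 < X) (hv : v ∈ Ioo (a / X) (b / X)) :
    X * v ∈ Ioo a b := by
  rw [mul_comm]
  exact ⟨(div_lt_iff₀ hX).1 hv.1, (lt_div_iff₀ hX).1 hv.2⟩

theorem cot_eq_sub_of_eigen_eq {x v : ℝ} (hv : 0 < v) (hs : sin x ≠ 0)
    (h : (4 * v ^ 2 - 1) * sin x = 4 * v * cos x) : cot x = v - 1 / (4 * v) := by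
  rw [cot_eq_cos_div_sin, div_eq_iff hs]
  field_simp
  linarith

theorem eigen_eq_two_mul_of_cos_eq {θ v : ℝ} (h : cos θ = 2 * v * sin θ) :
    (4 * v ^ 2 - 1) * sin (2 * θ) = 4 * v * cos (2 * θ) := by
  rw [sin_two_mul, cos_two_mul', h]
  ring

section Eigenvalues

variable {X : ℝ}

theorem exists_cos_half_mul_eq (hX : 0 < X) :
    ∃ v ∈ Ioo 0 (π / X), cos (X * v / 2) = 2 * v * sin (X * v / 2) := by
  let g : ℝ → ℝ := fun v => cos (X * v / 2) - 2 * v * sin (X * v / 2)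
  have hg0 : g 0 = 1 := by simp [g]
  have hgπ : g (π / X) = -(2 * (π / X)) := by
    simp [g, show X * (π / X) / 2 = π / 2 by field_simp]
  have hπX : 0 < π / X := div_pos pi_pos hX
  obtain ⟨v, hv, hgv⟩ :=
    intermediate_value_Ioo' hπX.le (by fun_prop : Continuous g).continuousOn
      (show (0 : ℝ) ∈ Ioo (g (π / X)) (g 0) by rw [hg0, hgπ]; constructor <;> linarith)
  exact ⟨v, hv, sub_eq_zero.1 hgv⟩

theorem half_mul_mem_Ioo_zero_pi (hX : 0 < X) {v : ℝ} (hv : v ∈ Ioo 0 (π / X)) :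
    X * v / 2 ∈ Ioo 0 π := by
  have := mul_mem_Ioo_of_mem_Ioo_div hX (by rwa [zero_div] : v ∈ Ioo (0 / X) (π / X))
  exact ⟨by linarith [this.1], by linarith [this.2, pi_pos]⟩

theorem cot_half_mul_eq_of_cos_eq (hX : 0 < X) {v : ℝ} (hv : v ∈ Ioo 0 (π / X))
    (h : cos (X * v / 2) = 2 * v * sin (X * v / 2)) : cot (X * v / 2) = 2 * v := by
  have hsin : 0 < sin (X * v / 2) := sin_pos_of_mem_Ioo (half_mul_mem_Ioo_zero_pi hX hv)
  rw [cot_eq_cos_div_sin, h, mul_div_assoc, div_self hsin.ne', mul_one]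

theorem cot_half_mul_eq_unique (hX : 0 < X) {p q : ℝ} (hp : p ∈ Ioo 0 (π / X))
    (hq : q ∈ Ioo 0 (π / X)) (hpe : cot (X * p / 2) = 2 * p) (hqe : cot (X * q / 2) = 2 * q) :
    p = q := by
  have hcot := strictAntiOn_cot 0
  simp only [Int.cast_zero, zero_mul, zero_add] at hcot
  exact (hcot.comp_strictMonoOn (fun a _ b _ h => by gcongr)
    fun v hv => half_mul_mem_Ioo_zero_pi hX hv).eq_of_eq_of_strictMonoOn
    (fun a _ b _ h => by gcongr) hp hq hpe hqe

theorem exists_eigen_eq (hX : 0 < X) {k : ℕ} (hk : 0 < k) :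
    ∃ v ∈ Ioo (k * π / X) ((k + 1) * π / X),
      (4 * v ^ 2 - 1) * sin (X * v) = 4 * v * cos (X * v) := by
  -- multiplying by `(-1) ^ k` makes the sign change at the endpoints independent of `k`
  let f : ℝ → ℝ := fun v => (-1) ^ k * ((4 * v ^ 2 - 1) * sin (X * v) - 4 * v * cos (X * v))
  have hsq : ((-1 : ℝ) ^ k) * (-1) ^ k = 1 := by rw [← mul_pow]; norm_num
  have hf_nat_mul_pi (m : ℕ) : f (m * π / X) = -4 * (m * π / X) * ((-1) ^ k * (-1) ^ m) := by
    simp only [f, show X * (m * π / X) = m * π by field_simp, sin_nat_mul_pi, cos_nat_mul_pi]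
    ring
  have hfa : f (k * π / X) = -4 * (k * π / X) := by rw [hf_nat_mul_pi, hsq, mul_one]
  have hfb : f ((k + 1) * π / X) = 4 * ((k + 1) * π / X) := by
    have := hf_nat_mul_pi (k + 1)
    push_cast at this
    rw [this, pow_succ]
    linear_combination (4 * ((k + 1) * π / X)) * hsq
  have ha : 0 < k * π / X := by positivity
  have hb : 0 < (k + 1) * π / X := by positivity
  obtain ⟨v, hv, hfv⟩ := intermediate_value_Ioo (by gcongr; linarith)
    (by fun_prop : Continuous f).continuousOn
    (show (0 : ℝ) ∈ Ioo (f (k * π / X)) (f ((k + 1) * π / X)) by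
      rw [hfa, hfb]; constructor <;> linarith)
  refine ⟨v, hv, sub_eq_zero.1 ?_⟩
  simpa [f] using hfv

theorem eigen_eq_unique (hX : 0 < X) (k : ℕ) {p q : ℝ}
    (hp : p ∈ Ioo (k * π / X) ((k + 1) * π / X)) (hq : q ∈ Ioo (k * π / X) ((k + 1) * π / X))
    (hpe : (4 * p ^ 2 - 1) * sin (X * p) = 4 * p * cos (X * p))
    (hqe : (4 * q ^ 2 - 1) * sin (X * q) = 4 * q * cos (X * q)) : p = q := by
  set s := Ioo (k * π / X) ((k + 1) * π / X)
  have hcot := strictAntiOn_cot k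
  simp only [Int.cast_natCast] at hcot
  have hmaps : MapsTo (X * ·) s (Ioo (k * π) (k * π + π)) := fun v hv =>
    add_one_mul (k : ℝ) π ▸ mul_mem_Ioo_of_mem_Ioo_div hX hv
  have hpos : ∀ v ∈ s, 0 < v := fun v hv => lt_of_le_of_lt (by positivity) hv.1
  have hcot_eq : ∀ v ∈ s, (4 * v ^ 2 - 1) * sin (X * v) = 4 * v * cos (X * v) →
      cot (X * v) = v - 1 / (4 * v) := fun v hv =>
    cot_eq_sub_of_eigen_eq (hpos v hv) (sin_ne_zero_of_mem_Ioo k (hmaps hv))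
  exact (hcot.comp_strictMonoOn (fun a _ b _ h => by gcongr) hmaps).eq_of_eq_of_strictMonoOn
    (g := fun v => v - 1 / (4 * v)) (fun a ha b _ h => by have := hpos a ha; beta_reduce; gcongr)
    hp hq
    (hcot_eq p hp hpe) (hcot_eq q hq hqe)

end Eigenvalues

/-- uniqueness of the eigenvalues `vₙ(X)` in successive intervals. -/
theorem stmt11 (X : ℝ) (hX : 0 < X) :
    (∃! v : ℝ, v ∈ Set.Ioo 0 (Real.pi / X) ∧ Real.cot (X * v / 2) = 2 * v) ∧
    ∀ n : ℕ, 1 ≤ n →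
      ∃! v : ℝ, v ∈ Set.Ioo (((n:ℝ) - 1) * Real.pi / X) ((n:ℝ) * Real.pi / X) ∧
        (4 * v ^ 2 - 1) * Real.sin (X * v) = 4 * v * Real.cos (X * v) := by
  obtain ⟨v₁, hv₁, hcos⟩ := exists_cos_half_mul_eq hX
  have hcot := cot_half_mul_eq_of_cos_eq hX hv₁ hcos
  refine ⟨⟨v₁, ⟨hv₁, hcot⟩, fun w hw => cot_half_mul_eq_unique hX hw.1 hv₁ hw.2 hcot⟩, ?_⟩
  intro n hn
  obtain ⟨k, rfl⟩ := Nat.exists_eq_add_of_le' hn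
  simp only [Nat.cast_add, Nat.cast_one, add_sub_cancel_right]
  refine existsUnique_of_exists_of_unique ?_
    fun p q hp hq => eigen_eq_unique hX k hp.1 hq.1 hp.2 hq.2
  rcases k.eq_zero_or_pos with rfl | hk
  · refine ⟨v₁, by simpa using hv₁, ?_⟩
    simpa [mul_div_cancel₀] using eigen_eq_two_mul_of_cos_eq hcos
  · exact exists_eigen_eq hX hk
end

section
/- Let X > 0, V = V(X) ∈ (0, π/X) the unique root of cot(XV/2)=2V, and define k(X) = (X(1+4V²) + 4)/(2V²(1+4V²)). Then k is strictly increasing on (0,∞), k(X) → 0 as X → 0⁺, and k(X) → ∞ as X → ∞. Consequently, for every σ > 0 there is a unique X̃ > 0 with k(X̃) = σ. -/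
open Real Filter

/-!
With `u = X V / 2 ∈ (0, π/2)` the root condition reads `tan u = 1 / (2V)`, so `X` is recovered from
`V` as `paramOfRoot V = 2 arctan (1 / (2V)) / V`. This map is strictly decreasing, hence so is `V`, and
`V X → ∞` as `X → 0⁺`. Since `k X = kFormula X (V X)` is increasing in `X` and decreasing in `V`, `k` is
strictly increasing. The bound `arctan t ≤ t` gives `k ≤ V⁻⁴ → 0` at `0⁺`, and `V < π / X` gives
`k X ≥ X³ / (2π²)`. Every `σ > 0` is then a value of `k`, by the intermediate value theorem for the
continuous function `v ↦ kFormula (paramOfRoot v) v`.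
-/

open Set Topology

noncomputable def paramOfRoot (v : ℝ) : ℝ := 2 * arctan (1 / (2 * v)) / v

lemma arctan_le_self {t : ℝ} (ht : 0 ≤ t) : arctan t ≤ t := by
  simpa only [tan_arctan] using le_tan (arctan_nonneg.mpr ht) (arctan_lt_pi_div_two t)

lemma paramOfRoot_pos {v : ℝ} (hv : 0 < v) : 0 < paramOfRoot v := by
  have : 0 < arctan (1 / (2 * v)) := arctan_pos.mpr (by positivity)
  unfold paramOfRoot; positivity

lemma paramOfRoot_le {v : ℝ} (hv : 0 < v) : paramOfRoot v ≤ 1 / v ^ 2 :=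
  calc paramOfRoot v ≤ 2 * (1 / (2 * v)) / v := by
        unfold paramOfRoot; gcongr; exact arctan_le_self (by positivity)
    _ = 1 / v ^ 2 := by field_simp

lemma strictAntiOn_paramOfRoot : StrictAntiOn paramOfRoot (Ioi 0) := by
  intro v₁ (hv₁ : 0 < v₁) v₂ (hv₂ : 0 < v₂) hv
  have hpos : 0 < arctan (1 / (2 * v₁)) := arctan_pos.mpr (by positivity)
  have harctan : arctan (1 / (2 * v₂)) < arctan (1 / (2 * v₁)) :=
    arctan_strictMono (by gcongr)
  calc paramOfRoot v₂ < 2 * arctan (1 / (2 * v₁)) / v₂ := by unfold paramOfRoot; gcongr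
    _ < paramOfRoot v₁ := div_lt_div_of_pos_left (by positivity) hv₁ hv

lemma continuousOn_paramOfRoot : ContinuousOn paramOfRoot (Ioi 0) := by
  unfold paramOfRoot
  fun_prop (disch := intro v (hv : 0 < v); positivity)

lemma eq_paramOfRoot {X v : ℝ} (hX : 0 < X) (hv : v ∈ Ioo 0 (π / X))
    (hcot : cot (X * v / 2) = 2 * v) : X = paramOfRoot v := by
  obtain ⟨hv₀, hvπ⟩ := hv
  have hXv : X * v < π := (lt_div_iff₀' hX).mp hvπ
  have htan : tan (X * v / 2) = 1 / (2 * v) := by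
    rw [tan_eq_sin_div_cos, ← inv_div, ← cot_eq_cos_div_sin, hcot, one_div]
  have harctan : arctan (1 / (2 * v)) = X * v / 2 := by
    rw [← htan, arctan_tan (by nlinarith [pi_pos]) (by linarith)]
  unfold paramOfRoot
  rw [harctan]; field_simp

noncomputable def kFormula (X v : ℝ) : ℝ :=
  (X * (1 + 4 * v ^ 2) + 4) / (2 * v ^ 2 * (1 + 4 * v ^ 2))

lemma kFormula_eq_add (X : ℝ) {v : ℝ} (hv : v ≠ 0) :
    kFormula X v = X / (2 * v ^ 2) + 2 / (v ^ 2 * (1 + 4 * v ^ 2)) := by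
  unfold kFormula; field_simp; ring

lemma kFormula_nonneg {X : ℝ} (hX : 0 ≤ X) (v : ℝ) : 0 ≤ kFormula X v := by
  unfold kFormula; positivity

lemma kFormula_le_kFormula_left {X X' : ℝ} (v : ℝ) (hX : X ≤ X') : kFormula X v ≤ kFormula X' v := by
  unfold kFormula; gcongr

lemma kFormula_lt_kFormula_right {X v v' : ℝ} (hX : 0 ≤ X) (hv : 0 < v) (hvv' : v < v') :
    kFormula X v' < kFormula X v := by
  rw [kFormula_eq_add X hv.ne', kFormula_eq_add X (hv.trans hvv').ne']
  exact add_lt_add_of_le_of_lt (by gcongr) (by gcongr)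

lemma kFormula_le_inv_pow_four {X v : ℝ} (hv : 0 < v) (hX : X ≤ 1 / v ^ 2) :
    kFormula X v ≤ (v ^ 4)⁻¹ := by
  unfold kFormula
  rw [← one_div, div_le_div_iff₀ (by positivity) (by positivity)]
  rw [le_div_iff₀ (by positivity)] at hX
  nlinarith [mul_le_mul_of_nonneg_right hX (by positivity : (0 : ℝ) ≤ v ^ 2 * (1 + 4 * v ^ 2))]

lemma pow_three_div_le_kFormula {X v : ℝ} (hX : 0 < X) (hv : v ∈ Ioo 0 (π / X)) :
    X ^ 3 / (2 * π ^ 2) ≤ kFormula X v := by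
  obtain ⟨hv₀, hvπ⟩ := hv
  have hXv : (X * v) ^ 2 < π ^ 2 := by gcongr; exact (lt_div_iff₀' hX).mp hvπ
  calc X ^ 3 / (2 * π ^ 2) ≤ X / (2 * v ^ 2) := by
        rw [div_le_div_iff₀ (by positivity) (by positivity)]
        nlinarith [mul_lt_mul_of_pos_left hXv hX]
    _ ≤ kFormula X v := by
        rw [kFormula_eq_add X hv₀.ne', le_add_iff_nonneg_right]; positivity

lemma continuousOn_kFormula_paramOfRoot :
    ContinuousOn (fun v => kFormula (paramOfRoot v) v) (Ioi 0) := by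
  unfold kFormula
  have := continuousOn_paramOfRoot
  fun_prop (disch := intro v (hv : 0 < v); positivity)

def IsCotRoot (V : ℝ → ℝ) : Prop :=
  ∀ X : ℝ, 0 < X → V X ∈ Ioo 0 (π / X) ∧ cot (X * V X / 2) = 2 * V X

namespace IsCotRoot

variable {V : ℝ → ℝ}

lemma pos (hV : IsCotRoot V) {X : ℝ} (hX : 0 < X) : 0 < V X := (hV X hX).1.1

lemma paramOfRoot_eq (hV : IsCotRoot V) {X : ℝ} (hX : 0 < X) : paramOfRoot (V X) = X :=
  (eq_paramOfRoot hX (hV X hX).1 (hV X hX).2).symm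

lemma strictAntiOn (hV : IsCotRoot V) : StrictAntiOn V (Ioi 0) := by
  intro X₁ (hX₁ : 0 < X₁) X₂ (hX₂ : 0 < X₂) hX
  by_contra! hle
  have := strictAntiOn_paramOfRoot.antitoneOn (hV.pos hX₁) (hV.pos hX₂) hle
  rw [hV.paramOfRoot_eq hX₁, hV.paramOfRoot_eq hX₂] at this
  linarith

lemma apply_paramOfRoot (hV : IsCotRoot V) {v : ℝ} (hv : 0 < v) : V (paramOfRoot v) = v :=
  strictAntiOn_paramOfRoot.injOn (hV.pos (paramOfRoot_pos hv)) hv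
    (hV.paramOfRoot_eq (paramOfRoot_pos hv))

lemma tendsto_nhdsGT_zero (hV : IsCotRoot V) : Tendsto V (𝓝[>] 0) atTop := by
  refine tendsto_atTop.2 fun M => ?_
  have hm : 0 < max M 1 := lt_max_of_lt_right one_pos
  filter_upwards [Ioo_mem_nhdsGT (paramOfRoot_pos hm)] with X ⟨hX₀, hXm⟩
  refine (le_max_left M 1).trans (not_lt.1 fun hVX => ?_)
  have := strictAntiOn_paramOfRoot (hV.pos hX₀) hm hVX
  rw [hV.paramOfRoot_eq hX₀] at this
  linarith

lemma strictMonoOn_kFormula (hV : IsCotRoot V) :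
    StrictMonoOn (fun X => kFormula X (V X)) (Ioi 0) := by
  intro X₁ (hX₁ : 0 < X₁) X₂ (hX₂ : 0 < X₂) hX
  calc kFormula X₁ (V X₁) ≤ kFormula X₂ (V X₁) := kFormula_le_kFormula_left _ hX.le
    _ < kFormula X₂ (V X₂) :=
      kFormula_lt_kFormula_right hX₂.le (hV.pos hX₂) (hV.strictAntiOn hX₁ hX₂ hX)

lemma tendsto_kFormula_nhdsGT_zero (hV : IsCotRoot V) :
    Tendsto (fun X => kFormula X (V X)) (𝓝[>] 0) (𝓝 0) := by
  refine squeeze_zero' (g := fun X => (V X ^ 4)⁻¹) ?_ ?_ ?_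
  · filter_upwards [self_mem_nhdsWithin] with X (hX : 0 < X)
    exact kFormula_nonneg hX.le _
  · filter_upwards [self_mem_nhdsWithin] with X (hX : 0 < X)
    refine kFormula_le_inv_pow_four (hV.pos hX) ?_
    simpa only [hV.paramOfRoot_eq hX] using paramOfRoot_le (hV.pos hX)
  · exact tendsto_inv_atTop_zero.comp ((tendsto_pow_atTop four_ne_zero).comp hV.tendsto_nhdsGT_zero)

lemma tendsto_kFormula_atTop (hV : IsCotRoot V) :
    Tendsto (fun X => kFormula X (V X)) atTop atTop := by
  refine tendsto_atTop_mono' _ ?_ ((tendsto_pow_atTop three_ne_zero).atTop_div_const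
    (by positivity : (0 : ℝ) < 2 * π ^ 2))
  filter_upwards [eventually_gt_atTop 0] with X hX
  exact pow_three_div_le_kFormula hX (hV X hX).1

lemma exists_kFormula_eq (hV : IsCotRoot V) {σ : ℝ} (hσ : 0 < σ) :
    ∃ X, 0 < X ∧ kFormula X (V X) = σ := by
  obtain ⟨X₁, hk₁, hX₁ : 0 < X₁⟩ :=
    ((hV.tendsto_kFormula_nhdsGT_zero.eventually (gt_mem_nhds hσ)).and self_mem_nhdsWithin).exists
  obtain ⟨X₂, hk₂, hX₂⟩ :=
    ((hV.tendsto_kFormula_atTop.eventually_gt_atTop σ).and (eventually_gt_atTop 0)).exists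
  have hv₁ : kFormula (paramOfRoot (V X₁)) (V X₁) < σ := by rwa [hV.paramOfRoot_eq hX₁]
  have hv₂ : σ < kFormula (paramOfRoot (V X₂)) (V X₂) := by rwa [hV.paramOfRoot_eq hX₂]
  have hsub : uIcc (V X₁) (V X₂) ⊆ Ioi 0 :=
    (ordConnected_Ioi).uIcc_subset (hV.pos hX₁) (hV.pos hX₂)
  obtain ⟨v, hv, hkv⟩ := intermediate_value_uIcc (continuousOn_kFormula_paramOfRoot.mono hsub)
    (mem_uIcc_of_le hv₁.le hv₂.le)
  have hv₀ : 0 < v := hsub hv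
  exact ⟨paramOfRoot v, paramOfRoot_pos hv₀, by rwa [hV.apply_paramOfRoot hv₀]⟩

end IsCotRoot

/-- monotonicity and limits of `k(X) = (X(1+4V²)+4)/(2V²(1+4V²))`,
hence unique solvability of `k(X̃) = σ`. -/
theorem stmt13 (V : ℝ → ℝ)
    (hV : ∀ X : ℝ, 0 < X →
      V X ∈ Set.Ioo 0 (Real.pi / X) ∧ Real.cot (X * V X / 2) = 2 * V X)
    (k : ℝ → ℝ)
    (hk : ∀ X : ℝ, k X =
      (X * (1 + 4 * (V X) ^ 2) + 4) / (2 * (V X) ^ 2 * (1 + 4 * (V X) ^ 2))) :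
    StrictMonoOn k (Set.Ioi 0) ∧
    Tendsto k (nhdsWithin 0 (Set.Ioi 0)) (nhds 0) ∧
    Tendsto k atTop atTop ∧
    ∀ σ : ℝ, 0 < σ → ∃! X : ℝ, 0 < X ∧ k X = σ := by
  have hV : IsCotRoot V := hV
  obtain rfl : k = fun X => kFormula X (V X) := funext hk
  have hmono := hV.strictMonoOn_kFormula
  refine ⟨hmono, hV.tendsto_kFormula_nhdsGT_zero, hV.tendsto_kFormula_atTop, fun σ hσ => ?_⟩
  obtain ⟨X, hX, hkX⟩ := hV.exists_kFormula_eq hσ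
  exact ⟨X, ⟨hX, hkX⟩, fun Y ⟨hY, hkY⟩ => hmono.injOn hY hX (hkY.trans hkX.symm)⟩
end
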